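/- arXiv:1001.1597 — 4 statements merged into one kernel-verified Lean document; each statement's English description precedes it below -/
import Mathlib

section
/- Let D be a commutative integral domain, s ∈ D^n with n ≥ 2, and suppose f ∈ D[x] is a nonzero annihilator of the prefix s^(n-1) = (s_1,...,s_{n-1}) with Δ_n(f) ≠ 0. Then every nonzero annihilator g of s satisfies deg(g) ≥ n − deg(f). -/
open Polynomial Finset

/-- `f` is a (nonzero) annihilator of the finite sequence `s_1,…,s_n`:
`f_0 s_{j-d} + … + f_d s_j = 0` for all `d+1 ≤ j ≤ n`, where `d = deg f`. -/
def Annih (D : Type*) [CommRing D] (s : ℕ → D) (n : ℕ) (f : Polynomial D) : Prop :=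
  f ≠ 0 ∧ ∀ j : ℕ, f.natDegree + 1 ≤ j → j ≤ n →
    ∑ k ∈ Finset.range (f.natDegree + 1), f.coeff k * s (j - f.natDegree + k) = 0

/-- The linear complexity of `s_1,…,s_n`: minimal degree of a nonzero annihilator. -/
noncomputable def LC (D : Type*) [CommRing D] (s : ℕ → D) (n : ℕ) : ℕ :=
  sInf {d : ℕ | ∃ f : Polynomial D, Annih D s n f ∧ f.natDegree = d}

/-- The discrepancy `Δ_n(f) = Σ_{k=0}^{d} f_k s_{n-d+k}`. -/
def disc (D : Type*) [CommRing D] (s : ℕ → D) (n : ℕ) (f : Polynomial D) : D :=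
  ∑ k ∈ Finset.range (f.natDegree + 1), f.coeff k * s (n - f.natDegree + k)

/-!
If `deg f + deg g < n`, expand `Σ_{k,j} g_k f_j s_{i+k+j}` with `i = n - deg f - deg g` in two
ways. Summing over `j` first, every inner sum with `k < deg g` is an annihilation equation of `f`
on `s_1,…,s_{n-1}`, and the one with `k = deg g` is `Δ_n(f)`; so the total is `lc(g) Δ_n(f)`.
Summing over `k` first, every inner sum is an annihilation equation of `g` on `s_1,…,s_n`, so the
total is `0`. In a domain this contradicts `Δ_n(f) ≠ 0`.
-/

/-- For `1 ≤ i` this is the coefficient of `x^{-i}` in `p · s̲`. -/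
def mulSeqCoeff {R : Type*} [Semiring R] (s : ℕ → R) (p : R[X]) (i : ℕ) : R :=
  ∑ k ∈ range (p.natDegree + 1), p.coeff k * s (i + k)

theorem sum_coeff_mul_mulSeqCoeff_comm {R : Type*} [CommSemiring R] (s : ℕ → R) (p q : R[X])
    (i : ℕ) :
    ∑ k ∈ range (q.natDegree + 1), q.coeff k * mulSeqCoeff s p (i + k) =
      ∑ j ∈ range (p.natDegree + 1), p.coeff j * mulSeqCoeff s q (i + j) := by
  simp only [mulSeqCoeff, mul_sum]
  rw [sum_comm]
  refine sum_congr rfl fun j _ => sum_congr rfl fun k _ => ?_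
  rw [mul_left_comm, add_right_comm]

theorem disc_eq_mulSeqCoeff {D : Type*} [CommRing D] (s : ℕ → D) (n : ℕ) (f : D[X]) :
    disc D s n f = mulSeqCoeff s f (n - f.natDegree) :=
  rfl

theorem Annih.mulSeqCoeff_eq_zero {D : Type*} [CommRing D] {s : ℕ → D} {n : ℕ} {f : D[X]}
    (hf : Annih D s n f) {i : ℕ} (hi : 1 ≤ i) (hin : i + f.natDegree ≤ n) :
    mulSeqCoeff s f i = 0 := by
  simpa only [mulSeqCoeff, Nat.add_sub_cancel] using hf.2 (i + f.natDegree) (by omega) hin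

theorem deg_ge_of_disc_ne_zero_general (D : Type*) [CommRing D] [IsDomain D]
    (n : ℕ) (s : ℕ → D) (f : Polynomial D)
    (hf : Annih D s (n - 1) f) (hΔ : disc D s n f ≠ 0)
    (g : Polynomial D) (hg : Annih D s n g) :
    n - f.natDegree ≤ g.natDegree := by
  by_contra! hdeg
  set i := n - f.natDegree - g.natDegree
  have h_f_first : ∑ k ∈ range (g.natDegree + 1), g.coeff k * mulSeqCoeff s f (i + k) =
      g.leadingCoeff * disc D s n f := by
    rw [sum_range_succ, sum_eq_zero fun k hk => ?_, zero_add, disc_eq_mulSeqCoeff]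
    · congr 2
      omega
    · rw [hf.mulSeqCoeff_eq_zero (by omega) (by rw [mem_range] at hk; omega), mul_zero]
  have h_g_first : ∑ j ∈ range (f.natDegree + 1), f.coeff j * mulSeqCoeff s g (i + j) = 0 :=
    sum_eq_zero fun j hj => by
      rw [hg.mulSeqCoeff_eq_zero (by omega) (by rw [mem_range] at hj; omega), mul_zero]
  have := mul_ne_zero (leadingCoeff_ne_zero.2 hg.1) hΔ
  rw [← h_f_first, sum_coeff_mul_mulSeqCoeff_comm, h_g_first] at this
  exact this rfl

theorem deg_ge_of_disc_ne_zero (D : Type*) [CommRing D] [IsDomain D]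
    (n : ℕ) (hn : 2 ≤ n) (s : ℕ → D) (f : Polynomial D)
    (hf : Annih D s (n - 1) f) (hΔ : disc D s n f ≠ 0)
    (g : Polynomial D) (hg : Annih D s n g) :
    n - f.natDegree ≤ g.natDegree :=
  deg_ge_of_disc_ne_zero_general D n s f hf hΔ g hg
end

section
/- Let D be a commutative integral domain, s ∈ D^n, f a monic minimal polynomial of s, and t ∈ D^ℕ the infinite extension of s obtained by continuing the linear recurrence given by f. If the annihilator ideal Ann(t) ⊆ D[x] is principal, then Ann(t) = (f). -/
open Polynomial Finset

/-- The annihilator set of an infinite sequence `t_1, t_2, …` (contains `0`). -/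
def AnnSetInf (D : Type*) [CommRing D] (t : ℕ → D) : Set (Polynomial D) :=
  {f | ∀ j : ℕ, f.natDegree + 1 ≤ j →
    ∑ k ∈ Finset.range (f.natDegree + 1), f.coeff k * t (j - f.natDegree + k) = 0}

/-!
`f` annihilates `t` (on `[1, n]` because it annihilates `s`, beyond `n` because `t` is built
from `f`'s recurrence), so the generator `g` of `Ann(t)` divides `f`. Since `t` extends `s`,
`g` also annihilates `s`, so minimality of `f` gives `deg f ≤ deg g`. Over a domain a divisor of
the monic `f` of at least the same degree is associated to `f`, hence `(g) = (f)`.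
-/

section

variable {D : Type*} [CommRing D] {s t : ℕ → D} {n : ℕ}

theorem annih_of_mem_annSetInf (hts : ∀ j, 1 ≤ j → j ≤ n → t j = s j) {g : D[X]}
    (hg : g ∈ AnnSetInf D t) (hg0 : g ≠ 0) : Annih D s n g := by
  refine ⟨hg0, fun j hj hjn => ?_⟩
  rw [← hg j hj]
  refine Finset.sum_congr rfl fun k hk => ?_
  rw [Finset.mem_range] at hk
  rw [hts _ (by omega) (by omega)]

theorem Polynomial.Monic.mem_annSetInf_of_annih {f : D[X]} (hmonic : f.Monic)
    (hann : Annih D s n f) (hext1 : ∀ j, 1 ≤ j → j ≤ n → t j = s j)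
    (hext2 : ∀ j, max n f.natDegree < j →
      t j = -∑ k ∈ Finset.range f.natDegree, f.coeff k * t (j - f.natDegree + k)) :
    f ∈ AnnSetInf D t := by
  intro j hj
  by_cases hjn : j ≤ n
  · rw [← hann.2 j hj hjn]
    refine Finset.sum_congr rfl fun k hk => ?_
    rw [Finset.mem_range] at hk
    rw [hext1 _ (by omega) (by omega)]
  · have hj_sub_add : j - f.natDegree + f.natDegree = j := by omega
    rw [Finset.sum_range_succ, hj_sub_add, hmonic.coeff_natDegree, one_mul,
      hext2 j (max_lt (by omega) (by omega)), add_neg_cancel]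

end

theorem ann_ext_principal (D : Type*) [CommRing D] [IsDomain D]
    (n : ℕ) (s t : ℕ → D) (f : Polynomial D)
    (hmonic : f.Monic)
    (hann : Annih D s n f)
    (hmin : ∀ g, Annih D s n g → f.natDegree ≤ g.natDegree)
    (hext1 : ∀ j, 1 ≤ j → j ≤ n → t j = s j)
    (hext2 : ∀ j, max n f.natDegree < j →
      t j = -∑ k ∈ Finset.range f.natDegree, f.coeff k * t (j - f.natDegree + k))
    (hprinc : ∃ g : Polynomial D, AnnSetInf D t = {h | g ∣ h}) :
    AnnSetInf D t = {h | f ∣ h} := by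
  obtain ⟨g, hg⟩ := hprinc
  have hgf : g ∣ f := by
    simpa only [hg, Set.mem_ofPred_eq] using hmonic.mem_annSetInf_of_annih hann hext1 hext2
  have hg0 : g ≠ 0 := by
    rintro rfl
    exact hmonic.ne_zero (zero_dvd_iff.mp hgf)
  have hgs : Annih D s n g :=
    annih_of_mem_annSetInf hext1 (by rw [hg]; exact dvd_refl g) hg0
  have hassoc : Associated g f :=
    associated_of_dvd_of_natDegree_le_of_leadingCoeff hgf (hmin g hgs)
      (by rw [hmonic.leadingCoeff]; exact one_dvd _)
  rw [hg]
  exact Set.ext fun h => hassoc.dvd_iff_dvd_left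
end

section
/- Let D be a commutative integral domain, s ∈ D^n, and f ∈ D[x] nonzero with d = deg(f) ≥ 0. For d+1 ≤ j ≤ n, (f · s̲)_{d−j} = (f* · s̄)_j, where f* is the reciprocal polynomial and s̄(x) = s_1 x + ... + s_n x^n. Consequently, if f annihilates s then (f*, d) is a reciprocal pair for s, and if (g, ℓ) is a reciprocal pair for s then x^{ℓ−deg(g)} g* is a nonzero annihilator of s. -/
open Polynomial Finset

/-- `(g, ℓ)` is a reciprocal pair for `s_1,…,s_n`. -/
def RecipPair (D : Type*) [CommRing D] (s : ℕ → D) (n : ℕ) (g : Polynomial D) (ℓ : ℕ) : Prop :=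
  g.coeff 0 ≠ 0 ∧ g.natDegree ≤ ℓ ∧ ℓ ≤ n ∧
  ∀ j : ℕ, ℓ + 1 ≤ j → j ≤ n →
    ∑ k ∈ Finset.range (g.natDegree + 1), g.coeff k * s (j - k) = 0

/-! Reversing a polynomial of degree `d` turns the index `k ↦ d - k`, so the forward recurrence
`Σ f_k s_{j-d+k}` is the backward recurrence `Σ f*_k s_{j-k}` term by term. For the converse,
`X^(ℓ - deg g) * g*` has degree `ℓ` and reverses back to `g` because `g_0 ≠ 0`. -/

namespace Polynomial

variable {R : Type*} [Semiring R]

theorem sum_coeff_mul_shift_eq_sum_reverse_coeff (f : R[X]) (s : ℕ → R) {j : ℕ}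
    (hj : f.natDegree ≤ j) :
    ∑ k ∈ range (f.natDegree + 1), f.coeff k * s (j - f.natDegree + k)
      = ∑ k ∈ range (f.natDegree + 1), f.reverse.coeff k * s (j - k) := by
  rw [← sum_range_reflect]
  refine sum_congr rfl fun k hk => ?_
  rw [mem_range] at hk
  rw [coeff_reverse, revAt_le (by omega)]
  congr 2
  omega

theorem sum_range_coeff_mul_of_natDegree_le (p : R[X]) (t : ℕ → R) {N : ℕ}
    (h : p.natDegree ≤ N) :
    ∑ k ∈ range (N + 1), p.coeff k * t k = ∑ k ∈ range (p.natDegree + 1), p.coeff k * t k := by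
  rw [← sum_over_range' p (f := fun k a => a * t k) (fun _ => zero_mul _) (N + 1) (by omega),
    sum_over_range p (f := fun k a => a * t k) (fun _ => zero_mul _)]

theorem natDegree_reverse_of_coeff_zero_ne_zero {g : R[X]} (hg : g.coeff 0 ≠ 0) :
    g.reverse.natDegree = g.natDegree := by
  rw [reverse_natDegree, natTrailingDegree_eq_zero.mpr (Or.inr hg), Nat.sub_zero]

theorem reverse_reverse_of_coeff_zero_ne_zero {g : R[X]} (hg : g.coeff 0 ≠ 0) :
    g.reverse.reverse = g := by
  rw [reverse, natDegree_reverse_of_coeff_zero_ne_zero hg, reverse, reflect_reflect]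

end Polynomial

section

variable {R : Type*} [CommRing R] {s : ℕ → R} {n : ℕ}

theorem Annih.recipPair_reverse {f : R[X]} (hf : Annih R s n f) (hn : f.natDegree ≤ n) :
    RecipPair R s n f.reverse f.natDegree := by
  obtain ⟨hf0, hann⟩ := hf
  refine ⟨by rwa [coeff_zero_reverse, leadingCoeff_ne_zero], reverse_natDegree_le f, hn,
    fun j hj hjn => ?_⟩
  rw [← sum_range_coeff_mul_of_natDegree_le _ _ (reverse_natDegree_le f),
    ← sum_coeff_mul_shift_eq_sum_reverse_coeff f s (by omega), hann j hj hjn]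

theorem RecipPair.annih_X_pow_mul_reverse {g : R[X]} {ℓ : ℕ} (hg : RecipPair R s n g ℓ) :
    Annih R s n (X ^ (ℓ - g.natDegree) * g.reverse) := by
  obtain ⟨hg0, hgℓ, -, hrec⟩ := hg
  have : Nontrivial R := nontrivial_of_ne _ _ hg0
  have hrev : g.reverse ≠ 0 := reverse_eq_zero.not.mpr fun h => hg0 (by simp [h])
  have hdeg : (X ^ (ℓ - g.natDegree) * g.reverse).natDegree = ℓ := by
    rw [natDegree_X_pow_mul _ hrev, natDegree_reverse_of_coeff_zero_ne_zero hg0]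
    omega
  refine ⟨(monic_X_pow _).mul_right_ne_zero hrev, fun j hj hjn => ?_⟩
  rw [sum_coeff_mul_shift_eq_sum_reverse_coeff _ s (by omega), reverse_X_pow_mul,
    reverse_reverse_of_coeff_zero_ne_zero hg0, hdeg,
    sum_range_coeff_mul_of_natDegree_le g (fun k => s (j - k)) hgℓ]
  exact hrec j (by omega) hjn

end

theorem annih_recip_duality_general (D : Type*) [CommRing D]
    (n : ℕ) (s : ℕ → D) (f : Polynomial D) :
    (∀ j : ℕ, f.natDegree + 1 ≤ j → j ≤ n →
      ∑ k ∈ Finset.range (f.natDegree + 1), f.coeff k * s (j - f.natDegree + k)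
        = ∑ k ∈ Finset.range (f.natDegree + 1), f.reverse.coeff k * s (j - k)) ∧
    (Annih D s n f → f.natDegree ≤ n → RecipPair D s n f.reverse f.natDegree) ∧
    (∀ (g : Polynomial D) (ℓ : ℕ), RecipPair D s n g ℓ →
      Annih D s n (Polynomial.X ^ (ℓ - g.natDegree) * g.reverse)) :=
  ⟨fun _ hj _ => sum_coeff_mul_shift_eq_sum_reverse_coeff f s (by omega),
    fun hf hn => hf.recipPair_reverse hn,
    fun _ _ hg => hg.annih_X_pow_mul_reverse⟩

theorem annih_recip_duality (D : Type*) [CommRing D] [IsDomain D]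
    (n : ℕ) (s : ℕ → D) (f : Polynomial D) (hf : f ≠ 0) :
    (∀ j : ℕ, f.natDegree + 1 ≤ j → j ≤ n →
      ∑ k ∈ Finset.range (f.natDegree + 1), f.coeff k * s (j - f.natDegree + k)
        = ∑ k ∈ Finset.range (f.natDegree + 1), f.reverse.coeff k * s (j - k)) ∧
    (Annih D s n f → f.natDegree ≤ n → RecipPair D s n f.reverse f.natDegree) ∧
    (∀ (g : Polynomial D) (ℓ : ℕ), RecipPair D s n g ℓ →
      Annih D s n (Polynomial.X ^ (ℓ - g.natDegree) * g.reverse)) :=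
  annih_recip_duality_general D n s f
end

section
/- Let D be a commutative integral domain and s ∈ D^n. For each 1 ≤ j ≤ n let LC_j denote the linear complexity of the prefix (s_1,...,s_j). Then Σ_{j=1}^n LC_j ≤ Σ_{j=1}^n ⌊(j+1)/2⌋ = ⌊(n+1)²/4⌋. -/
open Polynomial Finset

/-!
When the minimal annihilator `f` of `s_1,…,s_n` fails at `n + 1`, take the last jump `m < n`
of `LC` and a minimal annihilator `g` of `s_1,…,s_m`; it fails at `m + 1`, and
`Δ_{m+1}(g) X^a f - Δ_{n+1}(f) X^b g`, with the shifts aligning both windows at `n + 1`,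
annihilates `s_1,…,s_{n+1}` (Berlekamp–Massey). Since `LC m + LC (m+1) ≤ m + 1` by induction,
`LC (n+1) ≤ max (LC n) (n + 1 - LC n)`. Hence each jump of `LC` lands at most at `n + 1 - LC n`,
which gives `∑_{j ≤ n} LC j ≤ LC n (n + 1 - LC n) ≤ (n + 1)² / 4`.
-/

lemma Monotone.exists_lt_succ_eq {α : Type*} [PartialOrder α] {a : ℕ → α} (ha : Monotone a)
    {n : ℕ} (h : a 0 < a n) : ∃ m < n, a m < a n ∧ a (m + 1) = a n := by
  induction n with
  | zero => exact absurd h (lt_irrefl _)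
  | succ n ih =>
    rcases (ha n.le_succ).lt_or_eq with hlt | heq
    · exact ⟨n, n.lt_succ_self, hlt, rfl⟩
    · obtain ⟨m, hmn, hlt, hm⟩ := ih (heq ▸ h)
      exact ⟨m, hmn.trans n.lt_succ_self, heq ▸ hlt, heq ▸ hm⟩

section Discrepancy

variable {D : Type*} [CommRing D] (s : ℕ → D)

lemma disc_eq_sum_range (f : D[X]) {N : ℕ} (hN : f.natDegree < N) (j : ℕ) :
    disc D s j f = ∑ k ∈ range N, f.coeff k * s (j - f.natDegree + k) := by
  refine sum_subset (range_subset_range.2 hN) fun k _ hk => ?_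
  rw [coeff_eq_zero_of_natDegree_lt (by simpa using hk), zero_mul]

lemma disc_sub_of_natDegree_lt {p q : D[X]} (hqp : q.natDegree < p.natDegree) (j : ℕ) :
    disc D s j (p - q) =
      disc D s j p - disc D s (j - p.natDegree + q.natDegree) q := by
  rw [disc_eq_sum_range s q (Nat.lt_succ_of_lt hqp), Nat.add_sub_cancel,
    disc, natDegree_sub_eq_left_of_natDegree_lt hqp, disc, ← sum_sub_distrib]
  exact sum_congr rfl fun k _ => by rw [coeff_sub, sub_mul]

lemma disc_X_pow_mul [Nontrivial D] (f : D[X]) {t j : ℕ} (hj : f.natDegree + t ≤ j) :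
    disc D s j (X ^ t * f) = disc D s j f := by
  rcases eq_or_ne f 0 with rfl | hf
  · simp
  rw [disc, natDegree_X_pow_mul t hf, show f.natDegree + t + 1 = t + (f.natDegree + 1) by omega,
    sum_range_add, disc]
  rw [sum_eq_zero fun k hk => by
    rw [coeff_X_pow_mul', if_neg (Nat.not_le_of_lt (mem_range.1 hk)), zero_mul], zero_add]
  refine sum_congr rfl fun k _ => ?_
  rw [add_comm t k, coeff_X_pow_mul]
  congr 2
  omega

lemma disc_C_mul [IsDomain D] (c : D) (f : D[X]) (j : ℕ) :
    disc D s j (C c * f) = c * disc D s j f := by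
  rcases eq_or_ne c 0 with rfl | hc
  · simp [disc]
  rw [disc, natDegree_C_mul hc, disc, mul_sum]
  exact sum_congr rfl fun k _ => by rw [coeff_C_mul, mul_assoc]

end Discrepancy

section LinearComplexity

variable {D : Type*} [CommRing D] (s : ℕ → D)

lemma Annih.disc_eq_zero {n : ℕ} {f : D[X]} (hf : Annih D s n f) {j : ℕ}
    (hj : f.natDegree < j) (hjn : j ≤ n) : disc D s j f = 0 :=
  hf.2 j hj hjn

lemma Annih.mono {m n : ℕ} {f : D[X]} (hf : Annih D s n f) (hmn : m ≤ n) : Annih D s m f :=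
  ⟨hf.1, fun j hj hjm => hf.2 j hj (hjm.trans hmn)⟩

lemma annih_succ_iff {n : ℕ} {f : D[X]} :
    Annih D s (n + 1) f ↔ Annih D s n f ∧ (f.natDegree ≤ n → disc D s (n + 1) f = 0) := by
  refine ⟨fun hf => ⟨hf.mono s n.le_succ, fun hfn => hf.disc_eq_zero s (by omega) le_rfl⟩,
    fun ⟨hf, hlast⟩ => ⟨hf.1, fun j hj hjn => ?_⟩⟩
  rcases Nat.lt_or_ge j (n + 1) with hjn' | hjn'
  · exact hf.disc_eq_zero s hj (by omega)
  · obtain rfl : j = n + 1 := by omega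
    exact hlast (by omega)

lemma annih_X_pow [Nontrivial D] (n : ℕ) : Annih D s n (X ^ n) :=
  ⟨(monic_X_pow n).ne_zero, fun j hj hjn => by rw [natDegree_X_pow] at hj; omega⟩

lemma exists_annih_natDegree_eq_LC [Nontrivial D] (n : ℕ) :
    ∃ f : D[X], Annih D s n f ∧ f.natDegree = LC D s n :=
  Nat.sInf_mem (⟨n, X ^ n, annih_X_pow s n, natDegree_X_pow n⟩ :
    {d | ∃ f : D[X], Annih D s n f ∧ f.natDegree = d}.Nonempty)

lemma LC_le_natDegree {n : ℕ} {f : D[X]} (hf : Annih D s n f) : LC D s n ≤ f.natDegree :=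
  Nat.sInf_le ⟨f, hf, rfl⟩

lemma LC_le_self [Nontrivial D] (n : ℕ) : LC D s n ≤ n := by
  simpa using LC_le_natDegree s (annih_X_pow s n)

lemma LC_mono [Nontrivial D] : Monotone (LC D s) := fun m n hmn => by
  obtain ⟨f, hf, hdeg⟩ := exists_annih_natDegree_eq_LC s n
  exact hdeg ▸ LC_le_natDegree s (hf.mono s hmn)

lemma LC_zero [Nontrivial D] : LC D s 0 = 0 :=
  Nat.le_zero.1 (LC_le_self s 0)

lemma LC_succ_le_of_not_annih_succ [IsDomain D] {m n : ℕ} (hmn : m < n) {f g : D[X]}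
    (hf : Annih D s n f) (hg : Annih D s m g) (hg' : ¬ Annih D s (m + 1) g) :
    LC D s (n + 1) ≤ max f.natDegree (n - m + g.natDegree) := by
  by_cases hfn : f.natDegree ≤ n → disc D s (n + 1) f = 0
  · exact (LC_le_natDegree s ((annih_succ_iff s).2 ⟨hf, hfn⟩)).trans (le_max_left _ _)
  obtain ⟨-, hΔf⟩ := Classical.not_imp.1 hfn
  obtain ⟨hgm, hΔg⟩ := Classical.not_imp.1 (not_and.1 ((annih_succ_iff s).not.1 hg') hg)
  set d := max f.natDegree (n - m + g.natDegree)
  have hfd : f.natDegree ≤ d := le_max_left _ _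
  have hgd : n - m + g.natDegree ≤ d := le_max_right _ _
  clear_value d
  set p := C (disc D s (m + 1) g) * (X ^ (d - f.natDegree) * f)
  set q := C (disc D s (n + 1) f) * (X ^ (d - (n - m + g.natDegree)) * g)
  have hp : p.natDegree = d := by
    rw [natDegree_C_mul hΔg, natDegree_X_pow_mul _ hf.1]
    omega
  have hq : q.natDegree = d - (n - m) := by
    rw [natDegree_C_mul hΔf, natDegree_X_pow_mul _ hg.1]
    omega
  have hqp : q.natDegree < p.natDegree := by omega
  have hpq : Annih D s (n + 1) (p - q) := by
    refine ⟨sub_ne_zero.2 fun h => by rw [h] at hp; omega, fun j hj hjn => ?_⟩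
    rw [natDegree_sub_eq_left_of_natDegree_lt hqp, hp] at hj
    change disc D s j (p - q) = 0
    rw [disc_sub_of_natDegree_lt s hqp, hp, hq, disc_C_mul, disc_C_mul,
      disc_X_pow_mul s f (by omega), disc_X_pow_mul s g (by omega),
      show j - d + (d - (n - m)) = j - (n - m) by omega]
    rcases Nat.lt_or_ge j (n + 1) with hjn' | hjn'
    · rw [hf.disc_eq_zero s (j := j) (by omega) (by omega),
        hg.disc_eq_zero s (j := j - (n - m)) (by omega) (by omega)]
      ring
    · obtain rfl : j = n + 1 := by omega
      rw [show n + 1 - (n - m) = m + 1 by omega]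
      ring
  calc LC D s (n + 1) ≤ (p - q).natDegree := LC_le_natDegree s hpq
    _ = d := by rw [natDegree_sub_eq_left_of_natDegree_lt hqp, hp]

lemma LC_succ_le [IsDomain D] (n : ℕ) : LC D s (n + 1) ≤ max (LC D s n) (n + 1 - LC D s n) := by
  induction n using Nat.strong_induction_on with
  | _ n ih =>
  rcases Nat.eq_zero_or_pos (LC D s n) with h0 | hpos
  · rw [h0, Nat.sub_zero]
    exact (LC_le_self s _).trans (le_max_right _ _)
  obtain ⟨m, hmn, hjump, hm⟩ := (LC_mono s).exists_lt_succ_eq (n := n) (by rwa [LC_zero])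
  obtain ⟨f, hf, hfdeg⟩ := exists_annih_natDegree_eq_LC s n
  obtain ⟨g, hg, hgdeg⟩ := exists_annih_natDegree_eq_LC s m
  have hg' : ¬ Annih D s (m + 1) g := fun h => by
    have := LC_le_natDegree s h
    omega
  have hm_le := ih m hmn
  have := LC_succ_le_of_not_annih_succ s hmn hf hg hg'
  omega

lemma sum_LC_le_mul [IsDomain D] (n : ℕ) :
    ∑ j ∈ Icc 1 n, LC D s j ≤ LC D s n * (n + 1 - LC D s n) := by
  induction n with
  | zero => simp
  | succ n ih =>
    rw [sum_Icc_succ_top (by omega)]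
    have hstep := LC_succ_le s n
    have hmono := LC_mono s n.le_succ
    have hle := LC_le_self s n
    set c := LC D s n
    set c' := LC D s (n + 1)
    suffices c * (n + 1 - c) + c' ≤ c' * (n + 1 + 1 - c') by omega
    rcases hmono.eq_or_lt with heq | hlt
    · rw [← heq, show n + 1 + 1 - c = (n + 1 - c) + 1 by omega, mul_add_one]
    · obtain ⟨a, ha⟩ : ∃ a, n + 1 - c = c' + a := Nat.exists_eq_add_of_le (by omega)
      rw [ha, show n + 1 + 1 - c' = c + a + 1 by omega]
      nlinarith

end LinearComplexity

lemma mul_sub_le_sq_div_four (a N : ℕ) : a * (N - a) ≤ N ^ 2 / 4 := by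
  rcases le_total a N with h | h
  · obtain ⟨b, rfl⟩ := Nat.exists_eq_add_of_le h
    rw [Nat.add_sub_cancel_left, Nat.le_div_iff_mul_le four_pos, mul_comm, ← mul_assoc]
    exact four_mul_le_sq_add a b
  · rw [Nat.sub_eq_zero_of_le h, mul_zero]
    exact Nat.zero_le _

lemma sum_Icc_succ_div_two (n : ℕ) : ∑ j ∈ Icc 1 n, (j + 1) / 2 = (n + 1) ^ 2 / 4 := by
  induction n with
  | zero => simp
  | succ n ih =>
    rw [sum_Icc_succ_top (by omega), ih]
    obtain ⟨m, rfl | rfl⟩ := Nat.even_or_odd' n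
    · ring_nf
      omega
    · ring_nf
      omega

theorem LC_sum_le (D : Type*) [CommRing D] [IsDomain D] (n : ℕ) (s : ℕ → D) :
    ∑ j ∈ Finset.Icc 1 n, LC D s j ≤ ∑ j ∈ Finset.Icc 1 n, (j + 1) / 2 ∧
    ∑ j ∈ Finset.Icc 1 n, (j + 1) / 2 = (n + 1) ^ 2 / 4 := by
  refine ⟨?_, sum_Icc_succ_div_two n⟩
  calc ∑ j ∈ Icc 1 n, LC D s j ≤ LC D s n * (n + 1 - LC D s n) := sum_LC_le_mul s n
    _ ≤ (n + 1) ^ 2 / 4 := mul_sub_le_sq_div_four _ _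
    _ = ∑ j ∈ Icc 1 n, (j + 1) / 2 := (sum_Icc_succ_div_two n).symm
end
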